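/- arXiv:2201.12065 — 5 statements merged into one kernel-verified Lean document; each statement's English description precedes it below -/
import Mathlib

section
/- The four quadrics q_0 = a_{1,2}a_{1,3} − a_{2,1}a_{2,3} + a_{3,1}a_{3,2}, q_1 = a_{0,2}a_{0,3} − a_{3,0}a_{3,2} + a_{2,0}a_{2,3}, q_2 = a_{1,0}a_{1,3} − a_{0,1}a_{0,3} + a_{3,0}a_{3,1}, q_3 = a_{0,1}a_{0,2} − a_{1,0}a_{1,2} + a_{2,0}a_{2,1} form a regular sequence in the polynomial ring ℂ[a_{0,1}, a_{0,2}, a_{0,3}, a_{1,0}, a_{1,2}, a_{1,3}, a_{2,0}, a_{2,1}, a_{2,3}, a_{3,0}, a_{3,1}, a_{3,2}] in 12 variables; in particular Q = V(q_0,q_1,q_2,q_3) ⊆ P^11 is a complete intersection of codimension 4. -/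
/- Variable indices in `Fin 12`:
0:a₀₁ 1:a₀₂ 2:a₀₃ 3:a₁₀ 4:a₁₂ 5:a₁₃ 6:a₂₀ 7:a₂₁ 8:a₂₃ 9:a₃₀ 10:a₃₁ 11:a₃₂ -/

open MvPolynomial

noncomputable section

abbrev Sa : Type := MvPolynomial (Fin 12) ℂ

def q0 : Sa := X 4 * X 5 - X 7 * X 8 + X 10 * X 11
def q1 : Sa := X 1 * X 2 - X 9 * X 11 + X 6 * X 8
def q2 : Sa := X 3 * X 5 - X 0 * X 2 + X 9 * X 10
def q3 : Sa := X 0 * X 1 - X 3 * X 4 + X 6 * X 7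

/-!
Each of `q0, q1, q2` is linear in a variable that the earlier quadrics do not involve, with a
variable as coefficient:
`q0 = a₁₃ a₁₂ + (a₃₁ a₃₂ - a₂₁ a₂₃)`, `q1 = a₀₃ a₀₂ + (a₂₀ a₂₃ - a₃₀ a₃₂)`,
`q2 = -a₀₃ a₀₁ + (a₁₀ a₁₃ + a₃₀ a₃₁)`.
Hence `(q0)`, `(q0, q1)`, `(q0, q1, q2)` are prime by one criterion: if `I` and `I + (p)` are prime
in `R`, `p ∉ I` and `d ∉ I + (p)`, then `I R[x] + (p x + d)` is prime in `R[x]`. Modulo `I` this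
says that `p x + d` is prime over a domain in which `p` is prime and `p ∤ d`: it generates the
kernel of evaluation at `-d / p`, because a step of pseudo-division multiplies by `p`, which can be
cancelled again. The auxiliary ideals `I + (p)` are handled the same way after reducing modulo the
variable `p`. Each quadric, and `1`, lies outside the ideal of its predecessors (evaluate at a
point), and modulo a prime ideal everything outside it is a nonzerodivisor.
-/

namespace Ideal

variable {R : Type*} [CommRing R]

theorem Quotient.span_singleton_mk (I : Ideal R) (p : R) :
    span {Quotient.mk I p} = (I ⊔ span {p}).map (Quotient.mk I) := by
  rw [map_sup, map_quotient_self, bot_sup_eq, map_span, Set.image_singleton]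

theorem Quotient.prime_mk_of_isPrime_sup {I : Ideal R} {p : R} (h : (I ⊔ span {p}).IsPrime)
    (hp : p ∉ I) : Prime (Quotient.mk I p) := by
  have hne : Quotient.mk I p ≠ 0 := by rwa [Ne, Quotient.eq_zero_iff_mem]
  rw [← span_singleton_prime hne, Quotient.span_singleton_mk]
  exact map_isPrime_of_surjective Quotient.mk_surjective (by rw [mk_ker]; exact le_sup_left)

theorem isPrime_map_equiv_iff {S : Type*} [CommRing S] (e : R ≃+* S) {I : Ideal R} :
    (I.map e).IsPrime ↔ I.IsPrime := by
  refine ⟨fun h => ?_, fun _ => map_isPrime_of_equiv e⟩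
  rw [← comap_map_of_bijective e e.bijective (I := I)]
  exact comap_isPrime e _

theorem map_span_insert {S F : Type*} [CommRing S] [FunLike F R S] [RingHomClass F R S] (f : F)
    (x : R) (G : Set R) : (span (insert x G)).map f = (span G).map f ⊔ span {f x} := by
  rw [span_insert, map_sup, map_span, Set.image_singleton, sup_comm]

theorem span_insert_insert_mul_add (x z y : R) (G : Set R) :
    span (insert x (insert (x * z + y) G)) = span (insert x (insert y G)) := by
  have h (a : R) : insert x (insert a G) = {x, a} ∪ G := by
    rw [Set.insert_union, Set.singleton_union]
  rw [h, h, span_union, span_union, span_pair_left_mul_add]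

end Ideal

namespace Polynomial

open Ideal

variable {R : Type*} [CommRing R]

theorem isPrime_map_C_sup_span_singleton {I : Ideal R} {f : R[X]}
    (hf : Prime (f.map (Ideal.Quotient.mk I))) : (I.map C ⊔ span {f}).IsPrime := by
  have hψ := map_surjective _ (Ideal.Quotient.mk_surjective (I := I))
  have hcomap : I.map C ⊔ span {f} =
      (span {f.map (Ideal.Quotient.mk I)}).comap (mapRingHom (Ideal.Quotient.mk I)) := by
    rw [← Set.image_singleton, ← coe_mapRingHom, ← Ideal.map_span,
      comap_map_of_surjective' _ hψ, ker_mapRingHom, mk_ker, sup_comm]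
  have := (span_singleton_prime hf.ne_zero).2 hf
  rw [hcomap]
  exact comap_isPrime _ _

section Linear

variable {D : Type*} [CommRing D] {p d : D}

theorem aeval_C_mul_X_add_C_neg_div {K : Type*} [Field K] [Algebra D K]
    (hp : algebraMap D K p ≠ 0) :
    aeval (-(algebraMap D K d) / algebraMap D K p) (C p * X + C d) = 0 := by
  simp only [map_add, map_mul, aeval_C, aeval_X]
  rw [mul_div_cancel₀ _ hp, neg_add_cancel]

variable [IsDomain D]

theorem C_mul_X_add_C_dvd_of_dvd_C_mul (hp : Prime p) (hpd : ¬p ∣ d) {g : D[X]}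
    (hg : C p * X + C d ∣ C p * g) : C p * X + C d ∣ g := by
  obtain ⟨h, hh⟩ := hg
  have hCp : Prime (C p) := prime_C_iff.2 hp
  obtain ⟨h', rfl⟩ : C p ∣ h := by
    refine (hCp.dvd_or_dvd ⟨g, hh.symm⟩).resolve_left fun hdvd => hpd ?_
    have : C p ∣ C d := (dvd_add_right (dvd_mul_right _ _)).1 hdvd
    simpa using (C_dvd_iff_dvd_coeff _ _).1 this 0
  refine ⟨h', mul_left_cancel₀ hCp.ne_zero ?_⟩
  rw [hh]
  ring

theorem C_mul_X_add_C_dvd_of_aeval_eq_zero (hp : Prime p) (hpd : ¬p ∣ d) {K : Type*} [Field K]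
    [Algebra D K] [IsFractionRing D K] {g : D[X]}
    (hg : aeval (-(algebraMap D K d) / algebraMap D K p) g = 0) : C p * X + C d ∣ g := by
  have hp0 : algebraMap D K p ≠ 0 := IsFractionRing.to_map_ne_zero_of_mem_nonZeroDivisors
    (mem_nonZeroDivisors_of_ne_zero hp.ne_zero)
  induction g using degree_lt_wf.induction with
  | _ g ih =>
    by_cases hg0 : g.natDegree = 0
    · rw [eq_C_of_natDegree_eq_zero hg0] at hg ⊢
      rw [aeval_C, map_eq_zero_iff _ (IsFractionRing.injective D K)] at hg
      simp [hg]
    have hg0' : g ≠ 0 := by rintro rfl; simp at hg0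
    set q := C g.leadingCoeff * X ^ (g.natDegree - 1)
    have hlt : degree (C p * g - (C p * X + C d) * q) < degree g := by
      refine (degree_sub_lt_left ?_ ?_ ?_).trans_eq (degree_C_mul hp.ne_zero)
      · rw [degree_C_mul hp.ne_zero, degree_mul, degree_linear hp.ne_zero,
          degree_C_mul_X_pow _ (leadingCoeff_ne_zero.2 hg0'), degree_eq_natDegree hg0']
        norm_cast
        omega
      · exact mul_ne_zero (C_ne_zero.2 hp.ne_zero) hg0'
      · rw [leadingCoeff_mul, leadingCoeff_mul, leadingCoeff_linear hp.ne_zero, leadingCoeff_C,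
          leadingCoeff_C_mul_X_pow]
    apply C_mul_X_add_C_dvd_of_dvd_C_mul hp hpd
    rw [← sub_add_cancel (C p * g) ((C p * X + C d) * q)]
    refine dvd_add (ih _ hlt ?_) (dvd_mul_right _ _)
    simp [hg, aeval_C_mul_X_add_C_neg_div hp0]

theorem prime_C_mul_X_add_C (hp : Prime p) (hpd : ¬p ∣ d) : Prime (C p * X + C d) := by
  set K := FractionRing D
  set r : K := -(algebraMap D K d) / algebraMap D K p
  have hroot : aeval r (C p * X + C d) = 0 :=
    aeval_C_mul_X_add_C_neg_div (IsFractionRing.to_map_ne_zero_of_mem_nonZeroDivisors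
      (mem_nonZeroDivisors_of_ne_zero hp.ne_zero))
  refine ⟨fun h0 => hp.ne_zero ?_, fun hu => ?_, fun g h hgh => ?_⟩
  · simpa using congr_arg (coeff · 1) h0
  · simpa [hroot] using hu.map (aeval r)
  · obtain ⟨c, hc⟩ := hgh
    have : aeval r g * aeval r h = 0 := by rw [← map_mul, hc, map_mul, hroot, zero_mul]
    exact (mul_eq_zero.1 this).imp (C_mul_X_add_C_dvd_of_aeval_eq_zero hp hpd)
      (C_mul_X_add_C_dvd_of_aeval_eq_zero hp hpd)

end Linear

variable {I : Ideal R} [I.IsPrime]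

theorem isPrime_map_C_sup_span_X : (I.map C ⊔ span {X}).IsPrime :=
  isPrime_map_C_sup_span_singleton (by simpa using prime_X)

theorem isPrime_map_C_sup_span_C_mul_X_add_C {p d : R} (hIp : (I ⊔ span {p}).IsPrime)
    (hpI : p ∉ I) (hdI : d ∉ I ⊔ span {p}) : (I.map C ⊔ span {C p * X + C d}).IsPrime := by
  refine isPrime_map_C_sup_span_singleton ?_
  simp only [Polynomial.map_add, Polynomial.map_mul, map_C, map_X]
  refine prime_C_mul_X_add_C (Quotient.prime_mk_of_isPrime_sup hIp hpI) ?_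
  rwa [← mem_span_singleton, Quotient.span_singleton_mk, mem_quotient_iff_mem le_sup_left]

end Polynomial

namespace MvPolynomial

open Ideal

variable {σ R : Type*} [CommRing R]

section isolateVar

variable [DecidableEq σ]

def isolateVarEquiv (i : σ) : MvPolynomial σ R ≃+* Polynomial (MvPolynomial {j // j ≠ i} R) :=
  ((renameEquiv R (Equiv.optionSubtypeNe i).symm).trans (optionEquivLeft R _)).toRingEquiv

@[simp]
theorem isolateVarEquiv_X_self (i : σ) :
    isolateVarEquiv i (X i : MvPolynomial σ R) = Polynomial.X := by
  simp [isolateVarEquiv]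

@[simp]
theorem isolateVarEquiv_rename_val (i : σ) (g : MvPolynomial {j // j ≠ i} R) :
    isolateVarEquiv i (rename Subtype.val g) = Polynomial.C g := by
  induction g using MvPolynomial.induction_on with
  | C a => simp [isolateVarEquiv]
  | add g h hg hh => simp [hg, hh]
  | mul_X g j hg =>
    rw [map_mul, map_mul, hg, rename_X, map_mul]
    simp [isolateVarEquiv, Equiv.optionSubtypeNe_symm_of_ne j.2]

theorem exists_isolateVarEquiv_eq_C {i : σ} {g : MvPolynomial σ R}
    (hg : g ∈ supported R {i}ᶜ) : ∃ g₀, isolateVarEquiv i g = Polynomial.C g₀ := by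
  rw [supported_eq_range_rename] at hg
  obtain ⟨g₀, rfl⟩ := hg
  exact ⟨g₀, isolateVarEquiv_rename_val i g₀⟩

theorem exists_map_isolateVarEquiv_span_eq_map_C {i : σ} {G : Set (MvPolynomial σ R)}
    (hG : G ⊆ supported R {i}ᶜ) :
    ∃ J : Ideal (MvPolynomial {j // j ≠ i} R),
      (span G).map (isolateVarEquiv i) = J.map Polynomial.C := by
  refine ⟨span {g₀ | rename Subtype.val g₀ ∈ G}, ?_⟩
  rw [map_span, map_span]
  congr 1
  ext f
  constructor
  · rintro ⟨g, hg, rfl⟩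
    obtain ⟨g₀, rfl⟩ := (supported_eq_range_rename (R := R) _ ▸ hG hg :)
    exact ⟨g₀, hg, (isolateVarEquiv_rename_val i g₀).symm⟩
  · rintro ⟨g₀, hg₀, rfl⟩
    exact ⟨_, hg₀, isolateVarEquiv_rename_val i g₀⟩

end isolateVar

variable {i : σ} {G : Set (MvPolynomial σ R)}

theorem isPrime_span_insert_X (hG : G ⊆ supported R {i}ᶜ) (hI : (span G).IsPrime) :
    (span (insert (X i) G)).IsPrime := by
  classical
  obtain ⟨J, hJ⟩ := exists_map_isolateVarEquiv_span_eq_map_C hG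
  have : J.IsPrime := by
    rwa [← isPrime_map_C_iff_isPrime, ← hJ, isPrime_map_equiv_iff]
  rw [← isPrime_map_equiv_iff (isolateVarEquiv i), map_span_insert, hJ, isolateVarEquiv_X_self]
  exact Polynomial.isPrime_map_C_sup_span_X

theorem isPrime_span_insert_mul_X_add (hG : G ⊆ supported R {i}ᶜ) {p d : MvPolynomial σ R}
    (hp : p ∈ supported R {i}ᶜ) (hd : d ∈ supported R {i}ᶜ) (hI : (span G).IsPrime)
    (hIp : (span (insert p G)).IsPrime) (hpI : p ∉ span G) (hdI : d ∉ span (insert p G)) :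
    (span (insert (p * X i + d) G)).IsPrime := by
  classical
  set e := isolateVarEquiv (R := R) i
  obtain ⟨J, hJ⟩ := exists_map_isolateVarEquiv_span_eq_map_C hG
  obtain ⟨p₀, hp₀⟩ := exists_isolateVarEquiv_eq_C hp
  obtain ⟨d₀, hd₀⟩ := exists_isolateVarEquiv_eq_C hd
  have hJp : (span (insert p G)).map e = (J ⊔ span {p₀}).map Polynomial.C := by
    rw [map_span_insert, hJ, hp₀, Ideal.map_sup, map_span, Set.image_singleton]
  have : J.IsPrime := by
    rwa [← isPrime_map_C_iff_isPrime, ← hJ, isPrime_map_equiv_iff]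
  have hJp_prime : (J ⊔ span {p₀}).IsPrime := by
    rwa [← isPrime_map_C_iff_isPrime, ← hJp, isPrime_map_equiv_iff]
  have hp₀J : p₀ ∉ J := fun h => hpI <| by
    rw [← apply_mem_of_equiv_iff (f := e), hJ, hp₀]
    exact mem_map_of_mem _ h
  have hd₀J : d₀ ∉ J ⊔ span {p₀} := fun h => hdI <| by
    rw [← apply_mem_of_equiv_iff (f := e), hJp, hd₀]
    exact mem_map_of_mem _ h
  rw [← isPrime_map_equiv_iff e, map_span_insert, hJ, map_add, map_mul, hp₀, hd₀,
    isolateVarEquiv_X_self]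
  exact Polynomial.isPrime_map_C_sup_span_C_mul_X_add_C hJp_prime hp₀J hd₀J

theorem isPrime_span_X [IsDomain R] (i : σ) : (span {X i} : Ideal (MvPolynomial σ R)).IsPrime :=
  (span_singleton_prime (X_ne_zero i)).2 X_prime

theorem notMem_span_of_eval_eq_zero {x : MvPolynomial σ R} (c : σ → R)
    (hG : ∀ g ∈ G, eval c g = 0) (hx : eval c x ≠ 0) : x ∉ span G := fun h =>
  hx (span_le.2 (show G ⊆ RingHom.ker (eval c) from hG) h)

end MvPolynomial

theorem RingTheory.Sequence.isRegular_of_isPrime_ofList_take {R : Type*} [CommRing R]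
    {rs : List R} (hprime : ∀ k < rs.length, (Ideal.ofList (rs.take k)).IsPrime)
    (hnotMem : ∀ k (hk : k < rs.length), rs[k] ∉ Ideal.ofList (rs.take k))
    (hne_top : Ideal.ofList rs ≠ ⊤) : IsRegular R rs := by
  refine ⟨⟨fun k hk => ?_⟩, ?_⟩
  · rw [smul_eq_mul, Ideal.mul_top, isSMulRegular_quotient_iff_mem_of_smul_mem]
    exact fun x hx => ((hprime k hk).mem_or_mem hx).resolve_left (hnotMem k hk)
  · rwa [smul_eq_mul, Ideal.mul_top, ne_comm]

section Quadrics

open Ideal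

theorem q0_eq_X5_mul_X4_add : q0 = X 5 * X 4 + (X 10 * X 11 - X 7 * X 8) := by
  rw [q0]
  ring

theorem q1_eq_X2_mul_X1_add : q1 = X 2 * X 1 + (X 6 * X 8 - X 9 * X 11) := by
  rw [q1]
  ring

theorem isPrime_span_q0 : (span {q0}).IsPrime := by
  rw [q0_eq_X5_mul_X4_add, ← insert_empty_eq]
  refine isPrime_span_insert_mul_X_add (Set.empty_subset _) ?_ ?_ (by simpa using isPrime_bot)
    (by simpa using isPrime_span_X 5) (by simp) ?_
  · apply_rules [X_mem_supported.2]; decide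
  · apply_rules [sub_mem, mul_mem, X_mem_supported.2] <;> decide
  · apply notMem_span_of_eval_eq_zero (fun j => if j = 10 ∨ j = 11 then 1 else 0) <;> simp

theorem isPrime_span_X2_q0 : (span {X 2, q0}).IsPrime := by
  refine isPrime_span_insert_X ?_ isPrime_span_q0
  rw [Set.singleton_subset_iff, SetLike.mem_coe, q0]
  apply_rules [add_mem, sub_mem, mul_mem, X_mem_supported.2] <;> decide

theorem isPrime_span_q0_q1 : (span {q0, q1}).IsPrime := by
  rw [Set.pair_comm, q1_eq_X2_mul_X1_add]
  refine isPrime_span_insert_mul_X_add ?_ ?_ ?_ isPrime_span_q0 isPrime_span_X2_q0 ?_ ?_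
  · rw [Set.singleton_subset_iff, SetLike.mem_coe, q0]
    apply_rules [add_mem, sub_mem, mul_mem, X_mem_supported.2] <;> decide
  · apply_rules [X_mem_supported.2]; decide
  · apply_rules [sub_mem, mul_mem, X_mem_supported.2] <;> decide
  · apply notMem_span_of_eval_eq_zero (fun j => if j = 2 then 1 else 0) <;> simp [q0]
  · apply notMem_span_of_eval_eq_zero (fun j => if j = 6 ∨ j = 8 then 1 else 0) <;> simp [q0]

theorem isPrime_span_q0_X8 : (span {q0, X 8}).IsPrime := by
  rw [q0_eq_X5_mul_X4_add]
  refine isPrime_span_insert_mul_X_add (by simp [X_mem_supported]) ?_ ?_ (isPrime_span_X 8)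
    (isPrime_span_insert_X (by simp [X_mem_supported]) (isPrime_span_X 8)) ?_ ?_
  · apply_rules [X_mem_supported.2]; decide
  · apply_rules [sub_mem, mul_mem, X_mem_supported.2] <;> decide
  · apply notMem_span_of_eval_eq_zero (fun j => if j = 5 then 1 else 0) <;> simp
  · apply notMem_span_of_eval_eq_zero (fun j => if j = 10 ∨ j = 11 then 1 else 0) <;> simp

theorem isPrime_span_X6X8_sub_X9X11_q0 : (span {X 6 * X 8 - X 9 * X 11, q0}).IsPrime := by
  rw [show (X 6 * X 8 - X 9 * X 11 : Sa) = X 8 * X 6 + -(X 9 * X 11) by ring]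
  refine isPrime_span_insert_mul_X_add ?_ ?_ ?_ isPrime_span_q0
    (by rw [Set.pair_comm]; exact isPrime_span_q0_X8) ?_ ?_
  · rw [Set.singleton_subset_iff, SetLike.mem_coe, q0]
    apply_rules [add_mem, sub_mem, mul_mem, X_mem_supported.2] <;> decide
  · apply_rules [X_mem_supported.2]; decide
  · apply_rules [neg_mem, mul_mem, X_mem_supported.2] <;> decide
  · apply notMem_span_of_eval_eq_zero (fun j => if j = 8 then 1 else 0) <;> simp [q0]
  · apply notMem_span_of_eval_eq_zero (fun j => if j = 9 ∨ j = 11 then 1 else 0) <;> simp [q0]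

theorem isPrime_span_X2_q1_q0 : (span {X 2, q1, q0}).IsPrime := by
  rw [q1_eq_X2_mul_X1_add, span_insert_insert_mul_add]
  refine isPrime_span_insert_X ?_ isPrime_span_X6X8_sub_X9X11_q0
  simp only [Set.insert_subset_iff, Set.singleton_subset_iff, SetLike.mem_coe, q0]
  and_intros <;> apply_rules [add_mem, sub_mem, mul_mem, X_mem_supported.2] <;> decide

theorem isPrime_span_q0_q1_q2 : (span {q0, q1, q2}).IsPrime := by
  have hperm : ({q0, q1, q2} : Set Sa) = {q2, q1, q0} := by
    ext
    simp only [Set.mem_insert_iff, Set.mem_singleton_iff]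
    tauto
  rw [hperm, show q2 = -X 2 * X 0 + (X 3 * X 5 + X 9 * X 10) by rw [q2]; ring]
  refine isPrime_span_insert_mul_X_add ?_ ?_ ?_ (by rw [Set.pair_comm]; exact isPrime_span_q0_q1)
    (by rw [span_insert_neg]; exact isPrime_span_X2_q1_q0) ?_ ?_
  · simp only [Set.insert_subset_iff, Set.singleton_subset_iff, SetLike.mem_coe, q0, q1]
    and_intros <;> apply_rules [add_mem, sub_mem, mul_mem, X_mem_supported.2] <;> decide
  · apply_rules [neg_mem, X_mem_supported.2]; decide
  · apply_rules [add_mem, mul_mem, X_mem_supported.2] <;> decide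
  · apply notMem_span_of_eval_eq_zero (fun j => if j = 2 then 1 else 0) <;> simp [q0, q1]
  · apply notMem_span_of_eval_eq_zero (fun j => if j = 3 ∨ j = 5 then 1 else 0) <;>
      simp [q0, q1]

end Quadrics

/-- The four Pfaffian quadrics form a regular sequence in the polynomial ring
`ℂ[a₀₁,…,a₃₂]` in 12 variables; in particular `Q = V(q0,q1,q2,q3) ⊆ ℙ¹¹`
is a complete intersection of codimension 4. -/
theorem stmt0 : RingTheory.Sequence.IsRegular Sa [q0, q1, q2, q3] := by
  refine RingTheory.Sequence.isRegular_of_isPrime_ofList_take (fun k hk => ?_) (fun k hk => ?_) ?_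
  · simp only [List.length_cons, List.length_nil] at hk
    interval_cases k <;> simp [← Ideal.span_insert]
    exacts [Ideal.isPrime_bot, isPrime_span_q0, isPrime_span_q0_q1, isPrime_span_q0_q1_q2]
  · simp only [List.length_cons, List.length_nil] at hk
    interval_cases k <;> simp [← Ideal.span_insert]
    · intro h
      simpa [q0] using congrArg (eval fun j => if j = 4 ∨ j = 5 then (1 : ℂ) else 0) h
    · apply notMem_span_of_eval_eq_zero (fun j => if j = 1 ∨ j = 2 then 1 else 0) <;> simp [q0, q1]
    · apply notMem_span_of_eval_eq_zero (fun j => if j = 3 ∨ j = 5 then 1 else 0) <;>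
        simp [q0, q1, q2]
    · apply notMem_span_of_eval_eq_zero (fun j => if j = 6 ∨ j = 7 then 1 else 0) <;>
        simp [q0, q1, q2, q3]
  · rw [Ideal.ne_top_iff_one]
    apply notMem_span_of_eval_eq_zero 0 <;> simp [q0, q1, q2, q3]
end
end

section
/- Let R be a commutative ring, n a natural number, and F ∈ R[X_1,…,X_n] a homogeneous polynomial of degree 2. Let p, q ∈ R^n satisfy F(p) = 0, F(q) = 0, and Σ_{i=1}^n q_i · (∂F/∂X_i)(p) = 0 (i.e., q lies on the tangent hyperplane of V(F) at p). Then F(s·p + t·q) = 0 for all s, t ∈ R; in particular the whole line through p and q is contained in V(F). (This is the lemma underlying the construction of lines contained in the complete intersection of quadrics Q: if p ∈ Q and q ∈ Q ∩ T_pQ, then the line pq lies in Q.) -/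
open MvPolynomial

/-! A quadratic form is a sum of products `ℓ₁ ℓ₂` of linear forms, and for such a product
`F(s x + t y) = s² F(x) + t² F(y) + s t (ℓ₁(x) ℓ₂(y) + ℓ₂(x) ℓ₁(y))`, where the mixed term is the
derivative of `F` at `x` in the direction `y`. Both sides being additive in `F`, the expansion
holds for every quadratic form, and the hypotheses kill all three terms. -/

namespace MvPolynomial

variable {σ R : Type*} [CommSemiring R]

theorem eval_smul_add_smul_of_mem_homogeneousSubmodule_one {ℓ : MvPolynomial σ R}
    (hℓ : ℓ ∈ homogeneousSubmodule σ R 1) (x y : σ → R) (s t : R) :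
    eval (s • x + t • y) ℓ = s * eval x ℓ + t * eval y ℓ := by
  rw [homogeneousSubmodule_one_eq_span_X] at hℓ
  induction hℓ using Submodule.span_induction with
  | mem _ h => obtain ⟨i, rfl⟩ := h; simp
  | zero => simp
  | add _ _ _ _ h₁ h₂ => simp only [map_add, h₁, h₂]; ring
  | smul c _ _ h => simp only [smul_eval, h]; ring

variable [Fintype σ]

theorem sum_mul_eval_pderiv_of_mem_homogeneousSubmodule_one {ℓ : MvPolynomial σ R}
    (hℓ : ℓ ∈ homogeneousSubmodule σ R 1) (x y : σ → R) :
    ∑ i, y i * eval x (pderiv i ℓ) = eval y ℓ := by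
  rw [homogeneousSubmodule_one_eq_span_X] at hℓ
  induction hℓ using Submodule.span_induction with
  | mem _ h =>
    classical
    obtain ⟨i, rfl⟩ := h
    simp [pderiv_X, Pi.single_apply]
  | zero => simp
  | add _ _ _ _ h₁ h₂ => simp only [map_add, mul_add, Finset.sum_add_distrib, h₁, h₂]
  | smul c _ _ h =>
    simp only [Derivation.map_smul, smul_eval, ← h, Finset.mul_sum]
    exact Finset.sum_congr rfl fun _ _ => by ring

theorem sum_mul_eval_pderiv_mul (F G : MvPolynomial σ R) (x y : σ → R) :
    ∑ i, y i * eval x (pderiv i (F * G)) =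
      eval x F * ∑ i, y i * eval x (pderiv i G) + eval x G * ∑ i, y i * eval x (pderiv i F) := by
  simp only [Derivation.leibniz, map_add, eval_mul, smul_eq_mul, Finset.mul_sum,
    ← Finset.sum_add_distrib]
  exact Finset.sum_congr rfl fun _ _ => by ring

theorem IsHomogeneous.eval_smul_add_smul {F : MvPolynomial σ R} (hF : F.IsHomogeneous 2)
    (x y : σ → R) (s t : R) :
    eval (s • x + t • y) F =
      s ^ 2 * eval x F + t ^ 2 * eval y F + s * t * ∑ i, y i * eval x (pderiv i F) := by
  replace hF : F ∈ homogeneousSubmodule σ R 1 * homogeneousSubmodule σ R 1 := by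
    rwa [← sq, homogeneousSubmodule_one_pow]
  induction hF using Submodule.mul_induction_on' with
  | mem_mul_mem ℓ hℓ m hm =>
    rw [sum_mul_eval_pderiv_mul, sum_mul_eval_pderiv_of_mem_homogeneousSubmodule_one hℓ,
      sum_mul_eval_pderiv_of_mem_homogeneousSubmodule_one hm, eval_mul, eval_mul, eval_mul,
      eval_smul_add_smul_of_mem_homogeneousSubmodule_one hℓ,
      eval_smul_add_smul_of_mem_homogeneousSubmodule_one hm]
    ring
  | add F _ G _ hF hG =>
    simp only [map_add, mul_add, Finset.sum_add_distrib, hF, hG]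
    ring

end MvPolynomial

/-- Let `F` be a homogeneous polynomial of degree 2 over a commutative ring `R`,
and let `p, q ∈ Rⁿ` satisfy `F(p) = 0`, `F(q) = 0`, and
`∑ i, q i * (∂F/∂Xᵢ)(p) = 0` (i.e. `q` lies on the tangent hyperplane of
`V(F)` at `p`). Then `F(s·p + t·q) = 0` for all `s, t ∈ R`: the whole line
through `p` and `q` is contained in `V(F)`. -/
theorem stmt3 (R : Type*) [CommRing R] (n : ℕ) (F : MvPolynomial (Fin n) R)
    (hF : F.IsHomogeneous 2) (p q : Fin n → R)
    (hp : eval p F = 0) (hq : eval q F = 0)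
    (htan : ∑ i, q i * eval p (pderiv i F) = 0) :
    ∀ s t : R, eval (fun i => s * p i + t * q i) F = 0 := by
  intro s t
  change eval (s • p + t • q) F = 0
  rw [hF.eval_smul_add_smul, hp, hq, htan]
  ring
end

section
/- Let u_0, u_1, u_2, u_3 ∈ ℂ with (u_0, u_1) ≠ (0,0) and (u_2, u_3) ≠ (0,0), and let p ∈ ℂ^12 be the point whose coordinates are a_{3,2} = u_0, a_{2,3} = u_1, a_{1,0} = u_2, a_{0,1} = u_3 and all other a_{i,j} = 0. Then p satisfies q_0(p) = q_1(p) = q_2(p) = q_3(p) = 0, and the 4×12 Jacobian matrix ((∂q_k/∂a_{i,j})(p))_k has rank exactly 4. (Hence Q is smooth of codimension 4 at p and the projective tangent space T_pQ is a P^7, as used in the parametrization of ℤ/3ℤ-Godeaux lines.) -/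
/-!
At `p` each quadric has only two monomials that are linear in the nonzero coordinates
`a₃₂, a₂₃, a₁₀, a₀₁`, so each gradient at `p` is supported on two coordinates, and the four
gradients use eight distinct coordinates. Gradients with pairwise disjoint supports are
linearly independent as soon as none of them vanishes, which is what `(u₀, u₁) ≠ 0` and
`(u₂, u₃) ≠ 0` guarantee.
-/

/- Variable indices in `Fin 12`:
0:a₀₁ 1:a₀₂ 2:a₀₃ 3:a₁₀ 4:a₁₂ 5:a₁₃ 6:a₂₀ 7:a₂₁ 8:a₂₃ 9:a₃₀ 10:a₃₁ 11:a₃₂ -/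

open MvPolynomial

noncomputable section

def qs : Fin 4 → Sa := ![q0, q1, q2, q3]

open Function

theorem linearIndependent_of_pairwise_disjoint_support {R ι κ : Type*} [Ring R]
    [NoZeroDivisors R] {v : ι → κ → R} (hv : ∀ i, v i ≠ 0)
    (hdisj : Pairwise (Disjoint on fun i => support (v i))) :
    LinearIndependent R v := by
  classical
  rw [linearIndependent_iff']
  intro s c hsum i hi
  obtain ⟨j, hj⟩ := Function.ne_iff.mp (hv i)
  have hcol : ∑ l ∈ s, c l * v l j = c i * v i j :=
    Finset.sum_eq_single i
      (fun l _ hli => by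
        rw [notMem_support.mp (Set.disjoint_left.mp (hdisj hli.symm) hj), mul_zero])
      (fun h => absurd hi h)
  have hj_eval := congrFun hsum j
  simp only [Finset.sum_apply, Pi.smul_apply, smul_eq_mul, Pi.zero_apply, hcol] at hj_eval
  exact (mul_eq_zero.mp hj_eval).resolve_right hj

theorem Matrix.rank_eq_card_of_pairwise_disjoint_support {K m n : Type*} [Field K]
    [Fintype m] [Fintype n] {M : Matrix m n K} (hM : ∀ i, M i ≠ 0)
    (hdisj : Pairwise (Disjoint on fun i => support (M i))) :
    M.rank = Fintype.card m :=
  (linearIndependent_of_pairwise_disjoint_support hM hdisj).rank_matrix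

def point (u0 u1 u2 u3 : ℂ) : Fin 12 → ℂ := ![u3, 0, 0, u2, 0, 0, 0, 0, u1, 0, 0, u0]

def jacobianAt (x : Fin 12 → ℂ) : Matrix (Fin 4) (Fin 12) ℂ :=
  Matrix.of fun k i => eval x (pderiv i (qs k))

theorem eval_qs_point (u0 u1 u2 u3 : ℂ) (k : Fin 4) : eval (point u0 u1 u2 u3) (qs k) = 0 := by
  fin_cases k <;> simp [qs, q0, q1, q2, q3, point]

theorem jacobianAt_point (u0 u1 u2 u3 : ℂ) :
    jacobianAt (point u0 u1 u2 u3) =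
      !![0, 0, 0, 0, 0, 0, 0, -u1, 0, 0, u0, 0;
         0, 0, 0, 0, 0, 0, u1, 0, 0, -u0, 0, 0;
         0, 0, -u3, 0, 0, u2, 0, 0, 0, 0, 0, 0;
         0, u3, 0, 0, -u2, 0, 0, 0, 0, 0, 0, 0] := by
  ext k i
  fin_cases k <;> fin_cases i <;> simp [jacobianAt, qs, q0, q1, q2, q3, point, pderiv_X]

theorem pairwise_disjoint_support_jacobianAt_point (u0 u1 u2 u3 : ℂ) :
    Pairwise (Disjoint on fun k => support (jacobianAt (point u0 u1 u2 u3) k)) := by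
  let S : Fin 4 → Finset (Fin 12) := ![{7, 10}, {6, 9}, {2, 5}, {1, 4}]
  have hS : ∀ k, support (jacobianAt (point u0 u1 u2 u3) k) ⊆ S k := by
    intro k j hj
    rw [jacobianAt_point] at hj
    fin_cases k <;> fin_cases j <;> simp_all [S]
  have hS_disj : Pairwise (Disjoint on S) := by unfold Pairwise onFun; decide
  exact fun k l hkl => (Finset.disjoint_coe.mpr (hS_disj hkl)).mono (hS k) (hS l)

theorem jacobianAt_point_row_ne_zero {u0 u1 u2 u3 : ℂ} (h01 : (u0, u1) ≠ (0, 0))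
    (h23 : (u2, u3) ≠ (0, 0)) (k : Fin 4) : jacobianAt (point u0 u1 u2 u3) k ≠ 0 := by
  rw [jacobianAt_point]
  fin_cases k <;> simp [funext_iff, Fin.forall_fin_succ] at h01 h23 ⊢ <;> tauto

/-- Let `(u₀,u₁) ≠ (0,0)` and `(u₂,u₃) ≠ (0,0)`, and let `p ∈ ℂ¹²` be the point
with `a₃₂ = u₀`, `a₂₃ = u₁`, `a₁₀ = u₂`, `a₀₁ = u₃` and all other coordinates 0.
Then `p` lies on `Q = V(q0,q1,q2,q3)` and the `4×12` Jacobian matrix of the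
quadrics at `p` has rank exactly 4; hence `Q` is smooth of codimension 4 at `p`
and `T_pQ ≅ ℙ⁷`. -/
theorem stmt5 (u0 u1 u2 u3 : ℂ) (h01 : (u0, u1) ≠ (0, 0)) (h23 : (u2, u3) ≠ (0, 0)) :
    (∀ k : Fin 4, eval (![u3, 0, 0, u2, 0, 0, 0, 0, u1, 0, 0, u0]) (qs k) = 0) ∧
    (Matrix.of fun (k : Fin 4) (i : Fin 12) =>
        eval (![u3, 0, 0, u2, 0, 0, 0, 0, u1, 0, 0, u0]) (pderiv i (qs k))).rank = 4 :=
  ⟨eval_qs_point u0 u1 u2 u3,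
    Matrix.rank_eq_card_of_pairwise_disjoint_support (jacobianAt_point_row_ne_zero h01 h23)
      (pairwise_disjoint_support_jacobianAt_point u0 u1 u2 u3)⟩

end
end

section
/- (Image of the hyperelliptic parametrization lies in the determinantal hyperelliptic locus.) Substituting a_{i,j} = A_{ij} into the 4×6 matrix a = [[a_{0,1}, a_{0,2}, 0, a_{0,3}, 0, 0], [a_{1,0}, 0, a_{1,2}, 0, a_{1,3}, 0], [0, a_{2,0}, a_{2,1}, 0, 0, a_{2,3}], [0, 0, 0, a_{3,0}, a_{3,1}, a_{3,2}]] yields a 4×6 matrix over ℚ[v_0,v_1,w_0,w_1,x_0,x_1,y_0,y_1,z_0,z_1] all of whose 4×4 minors are the zero polynomial (i.e., the matrix has rank ≤ 3 identically on the image of φ). -/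
/-!
The four rows of `aMat` are linearly dependent over `T`: the explicit nonzero vector
`aLeftKernelVec` annihilates `aMat` from the left, as a direct polynomial identity checks
column by column. Over an integral domain a nonzero left-kernel vector of a matrix kills
each of its square column-submatrices as well, so every maximal minor vanishes.
-/

open MvPolynomial

noncomputable section

/- Variable indices in `Fin 10` for the parameter space:
0:v₀ 1:v₁ 2:w₀ 3:w₁ 4:x₀ 5:x₁ 6:y₀ 7:y₁ 8:z₀ 9:z₁ -/

abbrev T : Type := MvPolynomial (Fin 10) ℚ

def v0 : T := X 0
def v1 : T := X 1
def w0 : T := X 2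
def w1 : T := X 3
def x0 : T := X 4
def x1 : T := X 5
def y0 : T := X 6
def y1 : T := X 7
def z0 : T := X 8
def z1 : T := X 9

def A32 : T := v0^2 * (x1*w1 - x0*w0) * x1 * (x1 + x0) * y0 * y1 * z1^2
def A31 : T := v0^2 * (x1*w1 - x0*w0) * x0 * (x1 + x0) * y0 * y1 * z0^2
def A30 : T := -v1^2 * w0^2 * w1^2 * (w1 + w0) * x0 * x1 * (x1 + x0) * y0 * y1 * z1^2
def A23 : T := -v0^2 * (x1*w1 - x0*w0) * x0 * x1 * y0^2 * z1^2
def A21 : T := -v0^2 * (x1*w1 - x0*w0) * x0 * (x1 + x0) * y1^2 * z0^2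
def A20 : T := v1^2 * w0^2 * w1 * (w1 + w0)^2 * x0 * x1 * (x1 + x0) * y1^2 * z1^2
def A13 : T := -v0^2 * (x1*w1 - x0*w0) * x0 * x1 * y0^2 * z0 * z1
def A12 : T := v0^2 * (x1*w1 - x0*w0) * x1 * (x1 + x0) * y1^2 * z0 * z1
def A10 : T := -v1^2 * w0 * w1^2 * (w1 + w0)^2 * x0 * x1 * (x1 + x0) * y1^2 * z0 * z1
def A03 : T := -v0 * v1 * w0 * w1 * (x1*w1 - x0*w0) * x0 * x1 * y0^2 * z1^2
def A02 : T := v0 * v1 * w0 * (w1 + w0) * (x1*w1 - x0*w0) * x1 * (x1 + x0) * y1^2 * z1^2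
def A01 : T := -v0 * v1 * w1 * (w1 + w0) * (x1*w1 - x0*w0) * x0 * (x1 + x0) * y1^2 * z0^2

/-- The 4×6 `a`-matrix with the coordinates of the hyperelliptic
parametrization `φ` substituted for the variables `a_{i,j}`. -/
def aMat : Matrix (Fin 4) (Fin 6) T :=
  ![![A01, A02, 0, A03, 0, 0],
    ![A10, 0, A12, 0, A13, 0],
    ![0, A20, A21, 0, 0, A23],
    ![0, 0, 0, A30, A31, A32]]

open Matrix

theorem Matrix.det_submatrix_eq_zero_of_vecMul_eq_zero {R m n : Type*} [CommRing R] [IsDomain R]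
    [Fintype m] [DecidableEq m] {A : Matrix m n R} {u : m → R} (hu : u ≠ 0)
    (huA : u ᵥ* A = 0) (c : m → n) : (A.submatrix id c).det = 0 :=
  exists_vecMul_eq_zero_iff.mp ⟨u, hu, funext fun j => congrFun huA (c j)⟩

def aLeftKernelVec : Fin 4 → T :=
  ![v1 * w0 * w1 * (w1 + w0) * x0 * x1 * (x1 + x0) * y1 * z1,
    -(v0 * (x1*w1 - x0*w0) * x0 * (x1 + x0) * y1 * z0),
    -(v0 * (x1*w1 - x0*w0) * x1 * (x1 + x0) * y1 * z1),
    -(v0 * (x1*w1 - x0*w0) * x0 * x1 * y0 * z1)]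

theorem aLeftKernelVec_vecMul_aMat : aLeftKernelVec ᵥ* aMat = 0 := by
  funext k
  fin_cases k <;>
    simp [vecMul, dotProduct, Fin.sum_univ_four, aLeftKernelVec, aMat,
      A01, A02, A03, A10, A12, A13, A20, A21, A23, A30, A31, A32] <;>
    ring

theorem aLeftKernelVec_ne_zero : aLeftKernelVec ≠ 0 := by
  intro h
  have h0 := congrArg (eval fun _ => (1 : ℚ)) (congrFun h 0)
  norm_num [aLeftKernelVec, v1, w0, w1, x0, x1, y1, z1] at h0

/-- All 4×4 minors of the substituted `a`-matrix vanish identically, i.e.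
the `a`-matrix has rank ≤ 3 on the image of the parametrization `φ` of the
hyperelliptic locus. -/
theorem stmt8 : ∀ c : Fin 4 → Fin 6, (aMat.submatrix id c).det = 0 :=
  Matrix.det_submatrix_eq_zero_of_vecMul_eq_zero aLeftKernelVec_ne_zero aLeftKernelVec_vecMul_aMat

end
end

section
/- (Freeness of the ℤ/5ℤ-action on the quintic.) Let ξ ∈ ℂ be a primitive 5th root of unity, c_0,…,c_7 ∈ ℂ arbitrary, and let f_c = u_1^5 + u_2^5 + u_3^5 + u_4^5 + c_0 u_1^3 u_3 u_4 + c_1 u_1 u_2^3 u_3 + c_2 u_2 u_3^3 u_4 + c_3 u_1 u_2 u_4^3 + c_4 u_1^2 u_2^2 u_4 + c_5 u_1^2 u_2 u_3^2 + c_6 u_2^2 u_3 u_4^2 + c_7 u_1 u_3^2 u_4^2. If u = (u_1,u_2,u_3,u_4) ∈ ℂ^4 satisfies f_c(u) = 0, and for some k ∈ {1,2,3,4} and some λ ∈ ℂ one has ξ^{ik} u_i = λ u_i for all i = 1,2,3,4, then u = 0. In other words, no nontrivial power of β has a fixed point on the quintic surface Q_5 = V(f_c) ⊂ P^3, so the ℤ/5ℤ-action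 on Q_5 is free. -/
open MvPolynomial

noncomputable section

/- Variables `u₁, u₂, u₃, u₄` are `X 0, X 1, X 2, X 3` in `MvPolynomial (Fin 4) ℂ`. -/

/-- The `ℤ/5ℤ`-invariant family of quintic forms (equation (3) of the paper). -/
def fQuintic (c : Fin 8 → ℂ) : MvPolynomial (Fin 4) ℂ :=
  X 0^5 + X 1^5 + X 2^5 + X 3^5 +
    C (c 0) * X 0^3 * X 2 * X 3 +
    C (c 1) * X 0 * X 1^3 * X 2 +
    C (c 2) * X 1 * X 2^3 * X 3 +
    C (c 3) * X 0 * X 1 * X 3^3 +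
    C (c 4) * X 0^2 * X 1^2 * X 3 +
    C (c 5) * X 0^2 * X 1 * X 2^2 +
    C (c 6) * X 1^2 * X 2 * X 3^2 +
    C (c 7) * X 0 * X 2^2 * X 3^2

/-! Since `k` is prime to 5, the eigenvalues `ξ^{ik}` of `β^k` are pairwise distinct, so a fixed
vector of `β^k` in `ℂ⁴` lies on a coordinate axis. On the axis of `uᵢ` every mixed monomial of `f_c`
vanishes and `f_c = uᵢ⁵`, hence `uᵢ = 0`. -/

theorem IsPrimitiveRoot.eq_of_pow_mul_eq_pow_mul {M : Type*} [CommMonoid M] {ζ : M} {n k : ℕ}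
    (hζ : IsPrimitiveRoot ζ n) (hk : k.Coprime n) {i j : ℕ} (hi : i < n) (hj : j < n)
    (h : ζ ^ (i * k) = ζ ^ (j * k)) : i = j := by
  rw [pow_mul', pow_mul'] at h
  exact (hζ.pow_of_coprime k hk).pow_inj hi hj h

theorem eq_pi_single_of_forall_mul_eq_mul {ι K : Type*} [DecidableEq ι] [MonoidWithZero K]
    [IsRightCancelMulZero K] {a u : ι → K} {lam : K} (ha : Function.Injective a)
    (h : ∀ i, a i * u i = lam * u i) {i : ι} (hi : u i ≠ 0) : u = Pi.single i (u i) := by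
  funext j
  by_cases hji : j = i
  · subst hji; simp
  · rw [Pi.single_eq_of_ne hji]
    by_contra hj
    exact hji (ha ((mul_left_inj' hj).mp (h j) |>.trans ((mul_left_inj' hi).mp (h i)).symm))

theorem eval_pi_single_fQuintic (c : Fin 8 → ℂ) (i : Fin 4) (t : ℂ) :
    eval (Pi.single i t) (fQuintic c) = t ^ 5 := by
  fin_cases i <;> simp [fQuintic]

/-- Freeness of the `ℤ/5ℤ`-action on the quintic: if `ξ` is a primitive 5th
root of unity, `u ∈ ℂ⁴` satisfies `f_c(u) = 0`, and for some `1 ≤ k ≤ 4` and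
`λ ∈ ℂ` one has `ξ^{ik} uᵢ = λ uᵢ` for all `i`, then `u = 0`: no nontrivial
power of `β` has a fixed point on `Q₅ = V(f_c) ⊂ ℙ³`. -/
theorem stmt12 (ξ : ℂ) (hξ : IsPrimitiveRoot ξ 5) (c : Fin 8 → ℂ) (u : Fin 4 → ℂ)
    (hu : eval u (fQuintic c) = 0)
    (k : ℕ) (hk1 : 1 ≤ k) (hk4 : k ≤ 4) (lam : ℂ)
    (hfix : ∀ i : Fin 4, ξ^(((i : ℕ) + 1) * k) * u i = lam * u i) :
    u = 0 := by
  have hcop : k.Coprime 5 := ((Nat.Prime.coprime_iff_not_dvd Nat.prime_five).mpr (by omega)).symm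
  have hinj : Function.Injective fun i : Fin 4 => ξ ^ (((i : ℕ) + 1) * k) := fun i j h =>
    Fin.ext (by simpa using hξ.eq_of_pow_mul_eq_pow_mul hcop (by omega) (by omega) h)
  funext i
  by_contra hi
  rw [eq_pi_single_of_forall_mul_eq_mul hinj hfix hi, eval_pi_single_fQuintic] at hu
  exact hi (pow_eq_zero_iff (by norm_num) |>.mp hu)

end
end
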